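/- Let ω be a uniformly elliptic nearest-neighbor environment on ℤ^d with ellipticity constant κ. Suppose that for every u > 0 there exists a continuous function G̃_u : ℝ^d → ℝ such that for every η ∈ ℝ^d and every sequence (y_N)_{N≥1} in ℤ^d with y_N/N → η, one has (1/N) · G_{u,ω}(N, 0, y_N) → G̃_u(η) as N → ∞. Define I : ℝ^d → (−∞, +∞] by I(x) := sup_{u>0} G̃_u(x). Then for every open set G ⊆ ℝ^d, liminf_{N→∞} (1/N) · log P_{0,ω}(X_N/N ∈ G) ≥ − inf_{x∈G} I(x), with the conventions log 0 = −∞ and inf over the empty set = +∞. -/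

import Mathlib

open Filter

/-- The set of the `2d` unit vectors of `ℤ^d`. -/
def unitVecs (d : ℕ) : Finset (Fin d → ℤ) :=
  (Finset.univ.image fun i : Fin d => fun j => if j = i then (1 : ℤ) else 0) ∪
  (Finset.univ.image fun i : Fin d => fun j => if j = i then (-1 : ℤ) else 0)

/-- Quenched `n`-step transition probabilities of the random walk in environment `ω`. -/
noncomputable def qtp (d : ℕ) (ω : (Fin d → ℤ) → (Fin d → ℤ) → ℝ) :
    ℕ → (Fin d → ℤ) → (Fin d → ℤ) → ℝ
  | 0, x, y => if x = y then 1 else 0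
  | n + 1, x, y => ∑ e ∈ unitVecs d, ω x e * qtp d ω n (x + e) y

/-- `G_{u,ω}(t,x,y) := - log sup_n { e^{-u |n - t|} p_n(x,y) }`. -/
noncomputable def Gfun (d : ℕ) (ω : (Fin d → ℤ) → (Fin d → ℤ) → ℝ)
    (u t : ℝ) (x y : Fin d → ℤ) : ℝ :=
  - Real.log (⨆ n : ℕ, Real.exp (-u * |(n : ℝ) - t|) * qtp d ω n x y)

/-- `P_{0,ω}(X_N/N ∈ A) := ∑_{z : z/N ∈ A} p_N(0,z)`. -/
noncomputable def probQ (d : ℕ) (ω : (Fin d → ℤ) → (Fin d → ℤ) → ℝ)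
    (N : ℕ) (A : Set (Fin d → ℝ)) : ℝ :=
  ∑' z : Fin d → ℤ, A.indicator (fun _ => qtp d ω N 0 z) (fun i => (z i : ℝ) / (N : ℝ))

/-- Extended-real logarithm, with the convention `log x = -∞` for `x ≤ 0`. -/
noncomputable def elog (x : ℝ) : EReal := if x ≤ 0 then ⊥ else ((Real.log x : ℝ) : EReal)

/-!
Fix `x ∈ G`, a bound `I ≥ G̃_u(x)` for all `u > 0`, and lattice points `y_N ≈ N x` with
`∑ᵢ (y_N)ᵢ ≡ N (mod 2)`. Since `G_u(N, 0, y_N) ≤ N (I + ε)` for large `N`, some time `n` with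
`|n - N| ≤ (N (I + ε) + 1) / u` has `p_n(0, y_N) ≥ e^{-N (I + ε) - 1}`. If `n ≤ N`, the walk
spends the remaining `N - n` steps (an even number) going back and forth, at cost `κ^{N - n}`;
if `n > N`, at time `N` the walk is within `n - N` of `y_N`. Either way `X_N / N` lies within
`(I + 2) / u` of `y_N / N`, hence in `G` for `u` large, with probability at least
`κ^{(N (I + ε) + 1) / u} e^{-N (I + ε) - 1}`. Letting `u → ∞` and `ε → 0` gives the bound `-I`.
-/

open Real Metric Topology

lemma tendsto_div_natCast_of_abs_sub_mul_le {a : ℕ → ℝ} {x C : ℝ}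
    (h : ∀ N : ℕ, |a N - N * x| ≤ C) : Tendsto (fun N : ℕ => a N / N) atTop (𝓝 x) := by
  rw [tendsto_iff_norm_sub_tendsto_zero]
  refine squeeze_zero' (Eventually.of_forall fun _ => norm_nonneg _) ?_
    (tendsto_const_div_atTop_nhds_zero_nat C)
  filter_upwards [eventually_gt_atTop 0] with N hN
  have hN' : (0 : ℝ) < N := Nat.cast_pos.2 hN
  rw [Real.norm_eq_abs, le_div_iff₀ hN', ← abs_of_pos hN', ← abs_mul, abs_of_pos hN', sub_mul,
    div_mul_cancel₀ _ hN'.ne', mul_comm x]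
  exact h N

lemma coe_le_inv_mul_elog_of_exp_le {N a P : ℝ} (hN : 0 < N) (h : exp (N * a) ≤ P) :
    (a : EReal) ≤ ((N⁻¹ : ℝ) : EReal) * elog P := by
  have hP : 0 < P := (exp_pos _).trans_le h
  rw [elog, if_neg hP.not_ge, ← EReal.coe_mul, EReal.coe_le_coe_iff, le_inv_mul_iff₀ hN]
  exact (le_log_iff_exp_le hP).2 h

lemma EReal.neg_iSup_coe_le_of_forall {ι : Type*} [Nonempty ι] {f : ι → ℝ} {L : EReal}
    (h : ∀ I : ℝ, (∀ i, f i ≤ I) → ((-I : ℝ) : EReal) ≤ L) : -⨆ i, (f i : EReal) ≤ L := by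
  by_cases htop : ⨆ i, (f i : EReal) = ⊤
  · simp [htop]
  have hbot : ⨆ i, (f i : EReal) ≠ ⊥ :=
    ne_bot_of_le_ne_bot (EReal.coe_ne_bot (f (Classical.arbitrary ι)))
      (le_iSup (fun i => (f i : EReal)) _)
  rw [← EReal.coe_toReal htop hbot, ← EReal.coe_neg]
  refine h _ fun i => ?_
  rw [← EReal.coe_le_coe_iff, EReal.coe_toReal htop hbot]
  exact le_iSup (fun i => (f i : EReal)) i

lemma one_sub_log_div_nonneg {κ u : ℝ} (hκ0 : 0 < κ) (hκ1 : κ ≤ 1) (hu : 0 ≤ u) :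
    0 ≤ 1 - log κ / u :=
  sub_nonneg.2 ((div_nonpos_of_nonpos_of_nonneg (log_nonpos hκ0.le hκ1) hu).trans zero_le_one)

section RandomWalk

variable {d : ℕ} {ω : (Fin d → ℤ) → (Fin d → ℤ) → ℝ} {κ : ℝ}

lemma mem_unitVecs {e : Fin d → ℤ} :
    e ∈ unitVecs d ↔ ∃ i, e = Pi.single i 1 ∨ e = Pi.single i (-1) := by
  have single_eq (i : Fin d) (s : ℤ) : (fun j => if j = i then s else 0) = Pi.single i s :=
    funext fun j => (Pi.single_apply i s j).symm
  simp only [unitVecs, Finset.mem_union, Finset.mem_image, Finset.mem_univ, true_and, single_eq]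
  constructor
  · rintro (⟨i, rfl⟩ | ⟨i, rfl⟩)
    exacts [⟨i, .inl rfl⟩, ⟨i, .inr rfl⟩]
  · rintro ⟨i, rfl | rfl⟩
    exacts [.inl ⟨i, rfl⟩, .inr ⟨i, rfl⟩]

lemma abs_apply_le_one_of_mem_unitVecs {e : Fin d → ℤ} (he : e ∈ unitVecs d) (j : Fin d) :
    |e j| ≤ 1 := by
  obtain ⟨i, rfl | rfl⟩ := mem_unitVecs.1 he <;> rcases eq_or_ne j i with rfl | hj <;> simp [*]

lemma sum_eq_one_or_neg_one_of_mem_unitVecs {e : Fin d → ℤ} (he : e ∈ unitVecs d) :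
    ∑ j, e j = 1 ∨ ∑ j, e j = -1 := by
  obtain ⟨i, rfl | rfl⟩ := mem_unitVecs.1 he <;> simp [Finset.sum_pi_single']

lemma closure_unitVecs (d : ℕ) : AddSubmonoid.closure (unitVecs d : Set (Fin d → ℤ)) = ⊤ := by
  refine eq_top_iff.2 fun v _ => ?_
  rw [← Finset.univ_sum_single v]
  refine sum_mem fun i _ => ?_
  obtain ⟨n, hn | hn⟩ := Int.eq_nat_or_neg (v i)
  · rw [hn, ← nsmul_one, Pi.single_smul]
    exact nsmul_mem (AddSubmonoid.subset_closure (mem_unitVecs.2 ⟨i, .inl rfl⟩)) n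
  · rw [hn, ← nsmul_one, ← smul_neg, Pi.single_smul]
    exact nsmul_mem (AddSubmonoid.subset_closure (mem_unitVecs.2 ⟨i, .inr rfl⟩)) n

lemma qtp_zero (x y : Fin d → ℤ) : qtp d ω 0 x y = if x = y then 1 else 0 := rfl

lemma qtp_succ (n : ℕ) (x y : Fin d → ℤ) :
    qtp d ω (n + 1) x y = ∑ e ∈ unitVecs d, ω x e * qtp d ω n (x + e) y := rfl

lemma abs_sub_le_of_qtp_ne_zero {n : ℕ} {x y : Fin d → ℤ} (h : qtp d ω n x y ≠ 0) (i : Fin d) :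
    |y i - x i| ≤ n := by
  induction n generalizing x with
  | zero =>
    rw [qtp_zero, ne_eq, ite_eq_right_iff, not_forall] at h
    obtain ⟨rfl, -⟩ := h
    simp
  | succ n ih =>
    obtain ⟨e, he, hne⟩ := Finset.exists_ne_zero_of_sum_ne_zero h
    have hstep := ih (right_ne_zero_of_mul hne)
    have he_i := abs_apply_le_one_of_mem_unitVecs he i
    simp only [Pi.add_apply] at hstep
    push_cast
    rw [abs_le] at hstep he_i ⊢
    constructor <;> linarith

lemma qtp_parity {n : ℕ} {x y : Fin d → ℤ}
    (h : qtp d ω n x y ≠ 0) : (n : ZMod 2) = ((∑ i, (y i - x i) : ℤ) : ZMod 2) := by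
  induction n generalizing x with
  | zero =>
    rw [qtp_zero, ne_eq, ite_eq_right_iff, not_forall] at h
    obtain ⟨rfl, -⟩ := h
    simp
  | succ n ih =>
    obtain ⟨e, he, hne⟩ := Finset.exists_ne_zero_of_sum_ne_zero h
    have hstep := ih (right_ne_zero_of_mul hne)
    have hsplit : ∑ i, (y i - x i) = ∑ i, (y i - (x + e) i) + ∑ i, e i := by
      simp only [Pi.add_apply, ← Finset.sum_add_distrib]
      exact Finset.sum_congr rfl fun i _ => by ring
    have he_odd : ((∑ i, e i : ℤ) : ZMod 2) = 1 := by
      rcases sum_eq_one_or_neg_one_of_mem_unitVecs he with h1 | h1 <;> rw [h1] <;> decide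
    rw [hsplit, Int.cast_add, ← hstep, he_odd, Nat.cast_succ]

lemma qtp_nonneg (hω : ∀ x, ∀ e ∈ unitVecs d, 0 ≤ ω x e) (n : ℕ) (x y : Fin d → ℤ) :
    0 ≤ qtp d ω n x y := by
  induction n generalizing x with
  | zero => rw [qtp_zero]; positivity
  | succ n ih => exact Finset.sum_nonneg fun e he => mul_nonneg (hω x e he) (ih _)

lemma qtp_le_one (hω : ∀ x, ∀ e ∈ unitVecs d, 0 ≤ ω x e)
    (hsum : ∀ x, ∑ e ∈ unitVecs d, ω x e = 1) (n : ℕ) (x y : Fin d → ℤ) :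
    qtp d ω n x y ≤ 1 := by
  induction n generalizing x with
  | zero => rw [qtp_zero]; split <;> norm_num
  | succ n ih =>
    rw [qtp_succ, ← hsum x]
    exact Finset.sum_le_sum fun e he => mul_le_of_le_one_right (hω x e he) (ih _)

lemma mul_qtp_le_qtp_succ (hω : ∀ x, ∀ e ∈ unitVecs d, 0 ≤ ω x e) {e : Fin d → ℤ}
    (he : e ∈ unitVecs d) (n : ℕ) (x y : Fin d → ℤ) :
    ω x e * qtp d ω n (x + e) y ≤ qtp d ω (n + 1) x y :=
  Finset.single_le_sum (fun e' he' => mul_nonneg (hω x e' he') (qtp_nonneg hω n _ y)) he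

lemma exists_qtp_pos (hω : ∀ x, ∀ e ∈ unitVecs d, 0 < ω x e) (x y : Fin d → ℤ) :
    ∃ n, 0 < qtp d ω n x y := by
  have hω' : ∀ x, ∀ e ∈ unitVecs d, 0 ≤ ω x e := fun x e he => (hω x e he).le
  suffices ∀ v, ∀ x, ∃ n, 0 < qtp d ω n x (x + v) by simpa using this (y - x) x
  intro v
  induction (closure_unitVecs d).symm ▸ AddSubmonoid.mem_top v using
    AddSubmonoid.closure_induction_left with
  | zero => exact fun x => ⟨0, by simp [qtp_zero]⟩
  | add_left e he v _ ih =>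
    intro x
    obtain ⟨n, hn⟩ := ih (x + e)
    refine ⟨n + 1, lt_of_lt_of_le ?_ (mul_qtp_le_qtp_succ hω' he n x _)⟩
    rw [add_assoc] at hn
    exact mul_pos (hω x e he) hn

lemma sq_mul_qtp_le_qtp_add_two (hd : 1 ≤ d) (hκ : 0 ≤ κ)
    (hell : ∀ x, ∀ e ∈ unitVecs d, κ ≤ ω x e) (n : ℕ) (x y : Fin d → ℤ) :
    κ ^ 2 * qtp d ω n x y ≤ qtp d ω (n + 2) x y := by
  have hω : ∀ x, ∀ e ∈ unitVecs d, 0 ≤ ω x e := fun x e he => hκ.trans (hell x e he)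
  set e : Fin d → ℤ := Pi.single ⟨0, hd⟩ 1
  have he : e ∈ unitVecs d := mem_unitVecs.2 ⟨_, .inl rfl⟩
  have hne : -e ∈ unitVecs d := mem_unitVecs.2 ⟨_, .inr (Pi.single_neg _ _).symm⟩
  calc κ ^ 2 * qtp d ω n x y = κ * (κ * qtp d ω n (x + e + -e) y) := by
        rw [add_neg_cancel_right]; ring
    _ ≤ ω x e * (ω (x + e) (-e) * qtp d ω n (x + e + -e) y) :=
        mul_le_mul (hell _ _ he) (mul_le_mul_of_nonneg_right (hell _ _ hne) (qtp_nonneg hω _ _ _))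
          (mul_nonneg hκ (qtp_nonneg hω _ _ _)) (hω _ _ he)
    _ ≤ ω x e * qtp d ω (n + 1) (x + e) y :=
        mul_le_mul_of_nonneg_left (mul_qtp_le_qtp_succ hω hne n _ y) (hω _ _ he)
    _ ≤ qtp d ω (n + 2) x y := mul_qtp_le_qtp_succ hω he (n + 1) x y

lemma pow_mul_qtp_le_qtp_add (hd : 1 ≤ d) (hκ : 0 ≤ κ)
    (hell : ∀ x, ∀ e ∈ unitVecs d, κ ≤ ω x e) (m n : ℕ) (x y : Fin d → ℤ) :
    κ ^ (2 * m) * qtp d ω n x y ≤ qtp d ω (n + 2 * m) x y := by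
  induction m with
  | zero => simp
  | succ m ih =>
    calc κ ^ (2 * (m + 1)) * qtp d ω n x y = κ ^ 2 * (κ ^ (2 * m) * qtp d ω n x y) := by ring
      _ ≤ κ ^ 2 * qtp d ω (n + 2 * m) x y := by gcongr
      _ ≤ qtp d ω (n + 2 * (m + 1)) x y :=
        sq_mul_qtp_le_qtp_add_two hd hκ hell (n + 2 * m) x y

noncomputable def latticeBox (y : Fin d → ℤ) (k : ℕ) : Finset (Fin d → ℤ) :=
  Finset.Icc (y - k) (y + k)

lemma mem_latticeBox {y z : Fin d → ℤ} {k : ℕ} : z ∈ latticeBox y k ↔ ∀ i, |z i - y i| ≤ k := by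
  simp only [latticeBox, Finset.mem_Icc, Pi.le_def, Pi.sub_apply, Pi.add_apply, Pi.natCast_apply,
    abs_sub_le_iff, ← forall_and]
  exact forall_congr' fun i => by constructor <;> rintro ⟨h1, h2⟩ <;> constructor <;> linarith

lemma qtp_add_le_sum_latticeBox (hω : ∀ x, ∀ e ∈ unitVecs d, 0 ≤ ω x e)
    (hsum : ∀ x, ∑ e ∈ unitVecs d, ω x e = 1) (N k : ℕ) (x y : Fin d → ℤ) :
    qtp d ω (N + k) x y ≤ ∑ z ∈ latticeBox y k, qtp d ω N x z := by
  induction N generalizing x with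
  | zero =>
    simp only [zero_add, qtp_zero, Finset.sum_ite_eq]
    split_ifs with hx
    · exact qtp_le_one hω hsum k x y
    · refine le_of_eq (by_contra fun hne => hx (mem_latticeBox.2 fun i => ?_))
      rw [abs_sub_comm]
      exact abs_sub_le_of_qtp_ne_zero hne i
  | succ N ih =>
    rw [show N + 1 + k = N + k + 1 by omega, qtp_succ]
    calc ∑ e ∈ unitVecs d, ω x e * qtp d ω (N + k) (x + e) y
        ≤ ∑ e ∈ unitVecs d, ω x e * ∑ z ∈ latticeBox y k, qtp d ω N (x + e) z :=
          Finset.sum_le_sum fun e he => mul_le_mul_of_nonneg_left (ih _) (hω x e he)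
      _ = ∑ z ∈ latticeBox y k, qtp d ω (N + 1) x z := by
          simp only [Finset.mul_sum, qtp_succ]
          exact Finset.sum_comm

lemma sum_qtp_le_probQ (hω : ∀ x, ∀ e ∈ unitVecs d, 0 ≤ ω x e) (N : ℕ)
    (A : Set (Fin d → ℝ)) (T : Finset (Fin d → ℤ))
    (hT : ∀ z ∈ T, (fun i => (z i : ℝ) / N) ∈ A) :
    ∑ z ∈ T, qtp d ω N 0 z ≤ probQ d ω N A := by
  have hsupp : ∀ z ∉ latticeBox 0 N,
      A.indicator (fun _ => qtp d ω N 0 z) (fun i => (z i : ℝ) / N) = 0 := by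
    refine fun z hz => Set.indicator_apply_eq_zero.2 fun _ => by_contra fun hne => hz ?_
    exact mem_latticeBox.2 fun i => by simpa using abs_sub_le_of_qtp_ne_zero hne i
  calc ∑ z ∈ T, qtp d ω N 0 z
      = ∑ z ∈ T, A.indicator (fun _ => qtp d ω N 0 z) (fun i => (z i : ℝ) / N) :=
        Finset.sum_congr rfl fun z hz =>
          (Set.indicator_of_mem (hT z hz) fun _ => qtp d ω N 0 z).symm
    _ ≤ probQ d ω N A := (summable_of_ne_finset_zero hsupp).sum_le_tsum T
        fun z _ => Set.indicator_nonneg (fun _ _ => qtp_nonneg hω N 0 z) _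

lemma exists_qtp_ge_of_Gfun_le (hω : ∀ x, ∀ e ∈ unitVecs d, 0 ≤ ω x e)
    (hsum : ∀ x, ∑ e ∈ unitVecs d, ω x e = 1) {u t M : ℝ} (hu : 0 < u) {x y : Fin d → ℤ}
    (hpos : ∃ n, 0 < qtp d ω n x y) (hG : Gfun d ω u t x y ≤ M) :
    ∃ n : ℕ, |(n : ℝ) - t| ≤ (M + 1) / u ∧ exp (-(M + 1)) ≤ qtp d ω n x y := by
  have hexp (n : ℕ) : exp (-u * |(n : ℝ) - t|) ≤ 1 :=
    exp_le_one_iff.2 (by nlinarith [abs_nonneg ((n : ℝ) - t)])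
  have hbdd : BddAbove (Set.range fun n : ℕ => exp (-u * |(n : ℝ) - t|) * qtp d ω n x y) :=
    ⟨1, by
      rintro _ ⟨n, rfl⟩
      exact mul_le_one₀ (hexp n) (qtp_nonneg hω n x y) (qtp_le_one hω hsum n x y)⟩
  obtain ⟨n₀, hn₀⟩ := hpos
  have hsup_pos : 0 < ⨆ n : ℕ, exp (-u * |(n : ℝ) - t|) * qtp d ω n x y :=
    (mul_pos (exp_pos _) hn₀).trans_le (le_ciSup hbdd n₀)
  have hlt : exp (-(M + 1)) < ⨆ n : ℕ, exp (-u * |(n : ℝ) - t|) * qtp d ω n x y := by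
    rw [← exp_log hsup_pos, exp_lt_exp]
    rw [Gfun] at hG
    linarith
  obtain ⟨n, hn⟩ := (lt_ciSup_iff hbdd).1 hlt
  refine ⟨n, ?_, hn.le.trans (mul_le_of_le_one_left (qtp_nonneg hω n x y) (hexp n))⟩
  have hexp_ge := hn.trans_le (mul_le_of_le_one_right (exp_pos _).le (qtp_le_one hω hsum n x y))
  rw [exp_lt_exp] at hexp_ge
  rw [le_div_iff₀ hu]
  linarith

lemma rpow_mul_qtp_le_probQ {R : ℝ} (hd : 1 ≤ d) (hκ0 : 0 < κ) (hκ1 : κ ≤ 1)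
    (hell : ∀ x, ∀ e ∈ unitVecs d, κ ≤ ω x e) (hsum : ∀ x, ∑ e ∈ unitVecs d, ω x e = 1)
    {N n : ℕ} {y : Fin d → ℤ}
    (hpar : (N : ZMod 2) = ((∑ i, y i : ℤ) : ZMod 2)) (hnN : |(n : ℝ) - N| ≤ R)
    (A : Set (Fin d → ℝ)) (hA : ∀ z : Fin d → ℤ, (∀ i, |(z i : ℝ) - y i| ≤ R) →
      (fun i => (z i : ℝ) / N) ∈ A) :
    κ ^ R * qtp d ω n 0 y ≤ probQ d ω N A := by
  have hω : ∀ x, ∀ e ∈ unitVecs d, 0 ≤ ω x e := fun x e he => hκ0.le.trans (hell x e he)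
  have hR : 0 ≤ R := (abs_nonneg _).trans hnN
  rcases le_total n N with hle | hle
  · by_cases h0 : qtp d ω n 0 y = 0
    · rw [h0, mul_zero]
      simpa using sum_qtp_le_probQ hω N A ∅ (by simp)
    have hmod : n ≡ N [MOD 2] := (ZMod.natCast_eq_natCast_iff _ _ _).1 (by
      rw [qtp_parity h0, hpar]
      simp)
    obtain ⟨m, hm⟩ := (Nat.modEq_iff_dvd' hle).1 hmod
    have hmR : ((2 * m : ℕ) : ℝ) ≤ R := by
      rw [← hm, Nat.cast_sub hle]
      exact (le_abs_self _).trans ((abs_sub_comm _ _).trans_le hnN)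
    calc κ ^ R * qtp d ω n 0 y ≤ κ ^ (2 * m) * qtp d ω n 0 y := by
          rw [← Real.rpow_natCast]
          exact mul_le_mul_of_nonneg_right (rpow_le_rpow_of_exponent_ge hκ0 hκ1 hmR)
            (qtp_nonneg hω n 0 y)
      _ ≤ qtp d ω (n + 2 * m) 0 y := pow_mul_qtp_le_qtp_add hd hκ0.le hell m n 0 y
      _ = qtp d ω N 0 y := by rw [← hm, Nat.add_sub_cancel' hle]
      _ ≤ probQ d ω N A := by
          simpa using sum_qtp_le_probQ hω N A {y} (by simpa using hA y fun _ => by simpa using hR)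
  · -- at time `N` the walk is within `n - N` of `y`
    have hbox : ∀ z ∈ latticeBox y (n - N), (fun i => (z i : ℝ) / N) ∈ A := by
      refine fun z hz => hA z fun i => ?_
      have hzi : ((|z i - y i| : ℤ) : ℝ) ≤ ((n - N : ℕ) : ℤ) := by
        exact_mod_cast mem_latticeBox.1 hz i
      push_cast [Nat.cast_sub hle] at hzi
      exact hzi.trans ((le_abs_self _).trans hnN)
    calc κ ^ R * qtp d ω n 0 y ≤ qtp d ω n 0 y :=
          mul_le_of_le_one_left (qtp_nonneg hω n 0 y) (rpow_le_one hκ0.le hκ1 hR)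
      _ = qtp d ω (N + (n - N)) 0 y := by rw [Nat.add_sub_cancel' hle]
      _ ≤ ∑ z ∈ latticeBox y (n - N), qtp d ω N 0 z :=
          qtp_add_le_sum_latticeBox hω hsum N _ 0 y
      _ ≤ probQ d ω N A := sum_qtp_le_probQ hω N A _ hbox

lemma exists_tendsto_div_natCast_of_parity (hd : 1 ≤ d) (x : Fin d → ℝ) :
    ∃ y : ℕ → Fin d → ℤ, Tendsto (fun (N : ℕ) i => (y N i : ℝ) / N) atTop (𝓝 x) ∧
      ∀ N : ℕ, (N : ZMod 2) = ((∑ i, y N i : ℤ) : ZMod 2) := by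
  set y₀ : ℕ → Fin d → ℤ := fun N i => ⌊N * x i⌋
  -- move one step along the first axis when the parity of `⌊N x⌋` is wrong
  set δ : ℕ → ℤ := fun N => if (N : ZMod 2) = ((∑ i, y₀ N i : ℤ) : ZMod 2) then 0 else 1
  refine ⟨fun N => y₀ N + Pi.single ⟨0, hd⟩ (δ N), tendsto_pi_nhds.2 fun i =>
    tendsto_div_natCast_of_abs_sub_mul_le (C := 2) fun N => ?_, fun N => ?_⟩
  · have hδ : (0 : ℝ) ≤ ((Pi.single ⟨0, hd⟩ (δ N) : Fin d → ℤ) i : ℝ) ∧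
        ((Pi.single ⟨0, hd⟩ (δ N) : Fin d → ℤ) i : ℝ) ≤ 1 := by
      rw [Pi.single_apply]
      split_ifs
      · simp only [δ]
        split_ifs <;> norm_num
      · norm_num
    have h₁ := Int.floor_le ((N : ℝ) * x i)
    have h₂ := Int.lt_floor_add_one ((N : ℝ) * x i)
    simp only [Pi.add_apply, Int.cast_add, y₀]
    rw [abs_le]
    constructor <;> linarith
  · simp only [Pi.add_apply, Finset.sum_add_distrib, Finset.sum_pi_single', Finset.mem_univ,
      if_true, Int.cast_add]
    by_cases h : (N : ZMod 2) = ((∑ i, y₀ N i : ℤ) : ZMod 2)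
    · simp only [δ, if_pos h, Int.cast_zero, add_zero, h]
    · have hodd : ∀ a b : ZMod 2, a ≠ b → a = b + 1 := by decide
      simpa only [δ, if_neg h, Int.cast_one] using hodd _ _ h

lemma div_natCast_mem_closedBall {N : ℕ} (hN : (0 : ℝ) < N) {x : Fin d → ℝ} {y z : Fin d → ℤ}
    {r R : ℝ} (hr : 0 ≤ r) (hy : dist (fun i => (y i : ℝ) / N) x ≤ r) (hR : R ≤ N * r)
    (hz : ∀ i, |(z i : ℝ) - y i| ≤ R) : (fun i => (z i : ℝ) / N) ∈ closedBall x (2 * r) := by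
  have hzy : dist (fun i => (z i : ℝ) / N) (fun i => (y i : ℝ) / N) ≤ r := by
    refine (dist_pi_le_iff hr).2 fun i => ?_
    rw [Real.dist_eq, ← sub_div, abs_div, abs_of_pos hN, div_le_iff₀ hN, mul_comm]
    exact (hz i).trans hR
  exact mem_closedBall.2
    ((dist_triangle _ _ x).trans ((add_le_add hzy hy).trans_eq (two_mul r).symm))

lemma eventually_le_inv_mul_elog_probQ (hd : 1 ≤ d) (hκ0 : 0 < κ) (hκ1 : κ ≤ 1)
    (hell : ∀ x, ∀ e ∈ unitVecs d, κ ≤ ω x e) (hsum : ∀ x, ∑ e ∈ unitVecs d, ω x e = 1)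
    {u g : ℝ} (hu : 0 < u) {x : Fin d → ℝ} {y : ℕ → Fin d → ℤ}
    (hy : Tendsto (fun (N : ℕ) i => (y N i : ℝ) / N) atTop (𝓝 x))
    (hpar : ∀ N : ℕ, (N : ZMod 2) = ((∑ i, y N i : ℤ) : ZMod 2))
    (hg : Tendsto (fun N : ℕ => (N : ℝ)⁻¹ * Gfun d ω u N 0 (y N)) atTop (𝓝 g))
    {r ε : ℝ} (hr : 0 < r) (hε : 0 < ε) (hru : g + 2 * ε ≤ r * u)
    {A : Set (Fin d → ℝ)} (hA : closedBall x (2 * r) ⊆ A) :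
    ∀ᶠ N : ℕ in atTop, ((-(g + 2 * ε) * (1 - log κ / u) : ℝ) : EReal) ≤
      (((N : ℝ)⁻¹ : ℝ) : EReal) * elog (probQ d ω N A) := by
  have hω : ∀ x, ∀ e ∈ unitVecs d, 0 ≤ ω x e := fun x e he => hκ0.le.trans (hell x e he)
  filter_upwards [hg.eventually (gt_mem_nhds (lt_add_of_pos_right g hε)),
    hy.eventually (closedBall_mem_nhds x hr), eventually_gt_atTop 0,
    tendsto_inv_atTop_nhds_zero_nat.eventually (ge_mem_nhds hε)] with N hGN hyN hN hNε
  have hN0 : (0 : ℝ) < N := Nat.cast_pos.2 hN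
  have hG : Gfun d ω u N 0 (y N) ≤ N * (g + ε) := ((inv_mul_lt_iff₀ hN0).1 hGN).le
  have hM : N * (g + ε) + 1 ≤ N * (g + 2 * ε) := by
    linarith [(inv_le_iff_one_le_mul₀ hN0).1 hNε]
  obtain ⟨n, hnN, hqtp⟩ := exists_qtp_ge_of_Gfun_le hω hsum hu
    (exists_qtp_pos (fun x e he => hκ0.trans_le (hell x e he)) 0 (y N)) hG
  have hbox : ∀ z : Fin d → ℤ, (∀ i, |(z i : ℝ) - y N i| ≤ (N * (g + ε) + 1) / u) →
      (fun i => (z i : ℝ) / N) ∈ A := by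
    refine fun z hz => hA (div_natCast_mem_closedBall hN0 hr.le hyN ?_ hz)
    rw [div_le_iff₀ hu]
    linarith [mul_le_mul_of_nonneg_left hru hN0.le]
  refine coe_le_inv_mul_elog_of_exp_le hN0 ?_
  have hc := one_sub_log_div_nonneg hκ0 hκ1 hu.le
  calc exp (N * (-(g + 2 * ε) * (1 - log κ / u)))
      ≤ exp (log κ * ((N * (g + ε) + 1) / u) + -(N * (g + ε) + 1)) := by
        rw [exp_le_exp]
        calc N * (-(g + 2 * ε) * (1 - log κ / u)) = -(N * (g + 2 * ε) * (1 - log κ / u)) := by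
              ring
          _ ≤ -((N * (g + ε) + 1) * (1 - log κ / u)) :=
              neg_le_neg (mul_le_mul_of_nonneg_right hM hc)
          _ = log κ * ((N * (g + ε) + 1) / u) + -(N * (g + ε) + 1) := by ring
    _ = κ ^ ((N * (g + ε) + 1) / u) * exp (-(N * (g + ε) + 1)) := by
        rw [rpow_def_of_pos hκ0, exp_add]
    _ ≤ κ ^ ((N * (g + ε) + 1) / u) * qtp d ω n 0 (y N) :=
        mul_le_mul_of_nonneg_left hqtp (rpow_nonneg hκ0.le _)
    _ ≤ probQ d ω N A := rpow_mul_qtp_le_probQ hd hκ0 hκ1 hell hsum (hpar N) hnN A hbox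

lemma neg_le_liminf_inv_mul_elog_probQ (hd : 1 ≤ d) (hκ0 : 0 < κ) (hκ1 : κ ≤ 1)
    (hell : ∀ x, ∀ e ∈ unitVecs d, κ ≤ ω x e) (hsum : ∀ x, ∑ e ∈ unitVecs d, ω x e = 1)
    {A : Set (Fin d → ℝ)} (hA : IsOpen A) {x : Fin d → ℝ} (hx : x ∈ A) {g : ℝ → ℝ}
    (hg : ∀ u, 0 < u → ∀ y : ℕ → Fin d → ℤ,
      Tendsto (fun (N : ℕ) i => (y N i : ℝ) / N) atTop (𝓝 x) →
      Tendsto (fun N : ℕ => (N : ℝ)⁻¹ * Gfun d ω u N 0 (y N)) atTop (𝓝 (g u)))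
    {I : ℝ} (hI : ∀ u, 0 < u → g u ≤ I) :
    ((-I : ℝ) : EReal) ≤
      liminf (fun N : ℕ => (((N : ℝ)⁻¹ : ℝ) : EReal) * elog (probQ d ω N A)) atTop := by
  obtain ⟨y, hy, hpar⟩ := exists_tendsto_div_natCast_of_parity hd x
  obtain ⟨ρ, hρ, hball⟩ := isOpen_iff.1 hA x hx
  have hr : 0 < ρ / 3 := by positivity
  have hA' : closedBall x (2 * (ρ / 3)) ⊆ A := (closedBall_subset_ball (by linarith)).trans hball
  set u₀ := max 1 ((I + 2) / (ρ / 3))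
  have hu₀ : 0 < u₀ := lt_max_of_lt_left one_pos
  have hIu₀ : I + 2 ≤ ρ / 3 * u₀ := by
    rw [mul_comm, ← div_le_iff₀ hr]
    exact le_max_right _ _
  -- apply the eventual bound with `u = u₀ / ε` and let `ε → 0`
  have hf : Tendsto (fun ε => ((-(I + 2 * ε) * (1 - log κ * ε / u₀) : ℝ) : EReal)) (𝓝[>] 0)
      (𝓝 ((-I : ℝ) : EReal)) := by
    refine EReal.tendsto_coe.2 ?_
    have hcont : Continuous fun ε => -(I + 2 * ε) * (1 - log κ * ε / u₀) := by fun_prop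
    simpa using (hcont.tendsto 0).mono_left nhdsWithin_le_nhds
  refine le_of_tendsto hf ?_
  filter_upwards [Ioc_mem_nhdsGT one_pos] with ε ⟨hε0, hε1⟩
  have hu : 0 < u₀ / ε := div_pos hu₀ hε0
  have hgu := hI _ hu
  have hru : g (u₀ / ε) + 2 * ε ≤ ρ / 3 * (u₀ / ε) := by
    rw [← mul_div_assoc]
    linarith [le_div_self (mul_pos hr hu₀).le hε0 hε1]
  have hc := one_sub_log_div_nonneg hκ0 hκ1 hu.le
  refine le_liminf_of_le (by isBoundedDefault) ((eventually_le_inv_mul_elog_probQ hd hκ0 hκ1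
    hell hsum hu hy hpar (hg _ hu y hy) hr hε0 hru hA').mono fun N hN => le_trans ?_ hN)
  rw [EReal.coe_le_coe_iff, ← div_div_eq_mul_div]
  exact mul_le_mul_of_nonneg_right (by linarith) hc

end RandomWalk

theorem stmt6 (d : ℕ) (hd : 1 ≤ d) (κ : ℝ) (hκ0 : 0 < κ) (hκ1 : κ ≤ 1 / (2 * d))
    (ω : (Fin d → ℤ) → (Fin d → ℤ) → ℝ)
    (hell : ∀ x, ∀ e ∈ unitVecs d, κ ≤ ω x e)
    (hsum : ∀ x, ∑ e ∈ unitVecs d, ω x e = 1)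
    (Gt : ℝ → (Fin d → ℝ) → ℝ)
    (hGt : ∀ u : ℝ, 0 < u → Continuous (Gt u) ∧
      ∀ (η : Fin d → ℝ) (y : ℕ → Fin d → ℤ),
        Tendsto (fun N : ℕ => fun i => (y N i : ℝ) / (N : ℝ)) atTop (nhds η) →
        Tendsto (fun N : ℕ => (N : ℝ)⁻¹ * Gfun d ω u (N : ℝ) 0 (y N)) atTop
          (nhds (Gt u η)))
    (G : Set (Fin d → ℝ)) (hG : IsOpen G) :
    - ⨅ x ∈ G, ⨆ u : Set.Ioi (0 : ℝ), ((Gt u x : ℝ) : EReal)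
      ≤ Filter.liminf
          (fun N : ℕ => (((N : ℝ)⁻¹ : ℝ) : EReal) * elog (probQ d ω N G)) atTop := by
  have hκ_le_one : κ ≤ 1 :=
    hκ1.trans (div_le_one_of_le₀ (by norm_cast; omega) (by positivity))
  rw [EReal.neg_le]
  refine le_iInf₂ fun x hx => EReal.neg_le.1 ?_
  have : Nonempty (Set.Ioi (0 : ℝ)) := ⟨⟨1, Set.mem_Ioi.2 one_pos⟩⟩
  exact EReal.neg_iSup_coe_le_of_forall fun I hI =>
    neg_le_liminf_inv_mul_elog_probQ hd hκ0 hκ_le_one hell hsum hG hx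
      (fun u hu y hy => (hGt u hu).2 x y hy) fun u hu => hI ⟨u, hu⟩
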